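/- arXiv:1712.06028 — 2 statements merged into one kernel-verified Lean document; each statement's English description precedes it below -/
import Mathlib

section
/- The function jinc(x) = J₁(x)/x attains its supremum over (0,∞) in the limit x → 0⁺, where its value is 1/2; that is, J₁(x)/x ≤ 1/2 for all x > 0 and lim_{x→0⁺} J₁(x)/x = 1/2. -/
open Real Filter

/-- Bessel function of the first kind of order `ν`. -/
noncomputable def besselJ (ν x : ℝ) : ℝ :=
  ∑' m : ℕ, ((-1 : ℝ) ^ m / (m.factorial * Real.Gamma (m + ν + 1))) * (x / 2) ^ ((2 * m : ℝ) + ν)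

/-!
Write `J₁(x) / x = F(x² / 4) / 2` with `F(t) = ∑ (-1)ᵐ tᵐ / (m! (m+1)!)`, an entire series.
`F` solves `t F'' + 2 F' + F = 0`, so the energy `F² + t F'²` has derivative `-3 F'² ≤ 0` and
decreases from its value `1` at `t = 0`; hence `F ≤ 1` on `[0, ∞)`. The limit is continuity of
`F` at `0`, where `F(0) = 1`.
-/

open scoped Nat

noncomputable def powSum (a : ℕ → ℝ) (t : ℝ) : ℝ := ∑' m, a m * t ^ m

def derivCoeff (a : ℕ → ℝ) (m : ℕ) : ℝ := (m + 1) * a (m + 1)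

lemma powSum_zero (a : ℕ → ℝ) : powSum a 0 = a 0 := by
  rw [powSum, tsum_eq_single 0 fun m hm => by rw [zero_pow hm, mul_zero]]
  simp

section FactorialBound

variable {a : ℕ → ℝ}

lemma summable_mul_pow_of_abs_le (ha : ∀ m, |a m| ≤ 1 / m !) (t : ℝ) :
    Summable fun m => a m * t ^ m := by
  refine .of_norm_bounded (Real.summable_pow_div_factorial |t|) fun m => ?_
  rw [norm_mul, norm_pow, Real.norm_eq_abs, Real.norm_eq_abs, div_eq_mul_one_div, mul_comm]
  gcongr
  exact ha m

lemma hasSum_powSum (ha : ∀ m, |a m| ≤ 1 / m !) (t : ℝ) :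
    HasSum (fun m => a m * t ^ m) (powSum a t) :=
  (summable_mul_pow_of_abs_le ha t).hasSum

lemma abs_derivCoeff_le (ha : ∀ m, |a m| ≤ 1 / m !) (m : ℕ) : |derivCoeff a m| ≤ 1 / m ! := by
  have hm : (0 : ℝ) < m + 1 := by positivity
  calc |derivCoeff a m| = (m + 1) * |a (m + 1)| := by
        rw [derivCoeff, abs_mul, abs_of_pos hm]
    _ ≤ (m + 1) * (1 / (m + 1)!) := by gcongr; exact ha _
    _ = 1 / m ! := by
        rw [Nat.factorial_succ, Nat.cast_mul]; push_cast; field_simp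

lemma hasDerivAt_powSum (ha : ∀ m, |a m| ≤ 1 / m !) (t : ℝ) :
    HasDerivAt (powSum a) (powSum (derivCoeff a) t) t := by
  set R := |t| + 1
  have hbound : ∀ n, ∀ y ∈ Metric.ball (0 : ℝ) R,
      ‖a n * (n * y ^ (n - 1))‖ ≤ R ^ (n - 1) / (n - 1)! := by
    rintro (_ | k) y hy
    · simp
    · have hy : |y| ≤ R := by simpa using (mem_ball_zero_iff.mp hy).le
      calc ‖a (k + 1) * ((k + 1 : ℕ) * y ^ (k + 1 - 1))‖ = |derivCoeff a k| * |y| ^ k := by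
            simp [derivCoeff, abs_mul, mul_comm, mul_left_comm]
        _ ≤ 1 / k ! * R ^ k := by gcongr; exact abs_derivCoeff_le ha k
        _ = _ := by simp [div_eq_inv_mul]
  have hu : Summable fun n => R ^ (n - 1) / (n - 1)! :=
    (summable_nat_add_iff 1).mp (by simpa using Real.summable_pow_div_factorial R)
  have hderiv : HasDerivAt (powSum a) (∑' n, a n * (n * t ^ (n - 1))) t :=
    hasDerivAt_tsum_of_isPreconnected hu Metric.isOpen_ball (convex_ball 0 R).isPreconnected
      (fun n y _ => (hasDerivAt_pow n y).const_mul (a n)) hbound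
      (Metric.mem_ball_self (by positivity)) (summable_mul_pow_of_abs_le ha 0) (by simp [R])
  have hshift : HasSum (fun n => a n * (n * t ^ (n - 1))) (powSum (derivCoeff a) t) := by
    rw [← hasSum_nat_add_iff' 1]
    simpa [powSum, derivCoeff, mul_comm, mul_left_comm] using
      (summable_mul_pow_of_abs_le (abs_derivCoeff_le ha) t).hasSum
  rwa [hshift.tsum_eq] at hderiv

end FactorialBound

noncomputable def jincCoeff (m : ℕ) : ℝ := (-1) ^ m / (m ! * (m + 1)!)

lemma abs_jincCoeff_le (m : ℕ) : |jincCoeff m| ≤ 1 / m ! := by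
  rw [jincCoeff, abs_div, abs_pow, abs_neg, abs_one, one_pow, abs_of_pos (by positivity)]
  gcongr
  exact le_mul_of_one_le_right (by positivity) (mod_cast (m + 1).factorial_pos)

lemma add_two_mul_derivCoeff_jincCoeff_add (m : ℕ) :
    (m + 2) * derivCoeff jincCoeff m + jincCoeff m = 0 := by
  simp only [derivCoeff, jincCoeff, Nat.factorial_succ, Nat.cast_mul]
  push_cast
  field_simp
  ring

lemma powSum_jincCoeff_ode (t : ℝ) :
    t * powSum (derivCoeff (derivCoeff jincCoeff)) t + 2 * powSum (derivCoeff jincCoeff) t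
      + powSum jincCoeff t = 0 := by
  have hc := abs_jincCoeff_le
  have hlow : HasSum (fun m => (2 * derivCoeff jincCoeff m + jincCoeff m) * t ^ m)
      (2 * powSum (derivCoeff jincCoeff) t + powSum jincCoeff t) := by
    simpa only [add_mul, mul_assoc] using
      ((hasSum_powSum (abs_derivCoeff_le hc) t).mul_left 2).add (hasSum_powSum hc t)
  have hhigh : HasSum (fun m => derivCoeff (derivCoeff jincCoeff) m * t ^ (m + 1))
      (t * powSum (derivCoeff (derivCoeff jincCoeff)) t) := by
    simpa only [pow_succ, mul_comm, mul_left_comm] using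
      (hasSum_powSum (abs_derivCoeff_le (abs_derivCoeff_le hc)) t).mul_left t
  have hzero := hhigh.add ((hasSum_nat_add_iff' 1).mpr hlow)
  have hcoeff (m : ℕ) : derivCoeff (derivCoeff jincCoeff) m
      + (2 * derivCoeff jincCoeff (m + 1) + jincCoeff (m + 1)) = 0 := by
    have := add_two_mul_derivCoeff_jincCoeff_add (m + 1)
    rw [derivCoeff]
    push_cast at this
    linear_combination this
  have hcoeff0 : 2 * derivCoeff jincCoeff 0 + jincCoeff 0 = 0 := by
    simpa using add_two_mul_derivCoeff_jincCoeff_add 0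
  simp only [← add_mul, hcoeff, zero_mul, Finset.sum_range_one, hcoeff0, sub_zero] at hzero
  linarith [hzero.unique hasSum_zero]

lemma hasDerivAt_jinc_energy (t : ℝ) :
    HasDerivAt (fun s => powSum jincCoeff s ^ 2 + s * powSum (derivCoeff jincCoeff) s ^ 2)
      (-3 * powSum (derivCoeff jincCoeff) t ^ 2) t := by
  have hF := hasDerivAt_powSum abs_jincCoeff_le t
  have hG := hasDerivAt_powSum (abs_derivCoeff_le abs_jincCoeff_le) t
  refine ((hF.fun_pow 2).fun_add ((hasDerivAt_id' t).fun_mul (hG.fun_pow 2))).congr_deriv ?_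
  norm_num
  linear_combination (2 * powSum (derivCoeff jincCoeff) t) * powSum_jincCoeff_ode t

lemma powSum_jincCoeff_le_one {t : ℝ} (ht : 0 ≤ t) : powSum jincCoeff t ≤ 1 := by
  have henergy := antitone_of_hasDerivAt_nonpos hasDerivAt_jinc_energy
    (fun s => mul_nonpos_of_nonpos_of_nonneg (by norm_num) (sq_nonneg _)) ht
  simp only [powSum_zero, jincCoeff] at henergy
  norm_num at henergy
  nlinarith [mul_nonneg ht (sq_nonneg (powSum (derivCoeff jincCoeff) t))]

lemma besselJ_one_eq (x : ℝ) : besselJ 1 x = x / 2 * powSum jincCoeff (x ^ 2 / 4) := by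
  rw [besselJ, powSum, ← tsum_mul_left]
  refine tsum_congr fun m => ?_
  have hGamma : Gamma (m + 1 + 1) = (m + 1)! := by
    exact_mod_cast Real.Gamma_nat_eq_factorial (m + 1)
  have hpow : (x / 2) ^ (2 * (m : ℝ) + 1) = x / 2 * (x ^ 2 / 4) ^ m := by
    rw [show 2 * (m : ℝ) + 1 = (2 * m + 1 : ℕ) by push_cast; ring, rpow_natCast, pow_succ',
      pow_mul]
    ring
  rw [hGamma, hpow, jincCoeff]
  ring

/-- `jinc(x) = J₁(x)/x` is bounded by `1/2` on `(0,∞)` and tends to `1/2` as `x → 0⁺`. -/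
theorem jinc_le_half_and_limit :
    (∀ x > (0 : ℝ), besselJ 1 x / x ≤ 1 / 2) ∧
    Tendsto (fun x => besselJ 1 x / x) (nhdsWithin 0 (Set.Ioi 0)) (nhds (1 / 2)) := by
  have hjinc {x : ℝ} (hx : x ≠ 0) : besselJ 1 x / x = powSum jincCoeff (x ^ 2 / 4) / 2 := by
    rw [besselJ_one_eq]
    field_simp
  refine ⟨fun x hx => ?_, ?_⟩
  · rw [hjinc hx.ne']
    linarith [powSum_jincCoeff_le_one (t := x ^ 2 / 4) (by positivity)]
  · have hcont : Continuous fun x : ℝ => powSum jincCoeff (x ^ 2 / 4) / 2 :=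
      ((continuous_iff_continuousAt.mpr fun t =>
        (hasDerivAt_powSum abs_jincCoeff_le t).continuousAt).comp (by fun_prop)).div_const 2
    have hlim := (hcont.tendsto 0).mono_left (nhdsWithin_le_nhds (s := Set.Ioi 0))
    norm_num [powSum_zero, jincCoeff] at hlim
    exact hlim.congr' (eventually_nhdsWithin_of_forall fun x hx => (hjinc (ne_of_gt hx)).symm)
end

section
/- Let P₀ ≥ 1, r₀ ≤ r₁, N, V > 0, and let G(r; r₀, r₁, P₀) = f(r−r₁) + P₀(f(r−r₀) − f(r−r₁)) with f the Heaviside step. Then the function P(k) = 1 + (N/V)(2π)^{d/2} k^{1−d/2} ∫₀^∞ r^{d/2} J_{d/2−1}(kr)(G(r) − 1) dr equals 1 − (N/V) P₀ (2π r₀/k)^{d/2} J_{d/2}(k r₀) − (N/V)(1 − P₀)(2π r₁/k)^{d/2} J_{d/2}(k r₁) for every k > 0. -/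
open Real MeasureTheory Set

/-- Heaviside step function: `0` for `x ≤ 0`, `1` for `x > 0`. -/
noncomputable def heaviside (x : ℝ) : ℝ := if x ≤ 0 then 0 else 1

theorem MeasureTheory.integrable_tsum_of_summable_integral_norm {α E ι : Type*}
    [MeasurableSpace α] {μ : Measure α} [NormedAddCommGroup E] [CompleteSpace E] [Countable ι]
    {F : ι → α → E} (hF_int : ∀ i, Integrable (F i) μ)
    (hF_sum : Summable fun i ↦ ∫ a, ‖F i a‖ ∂μ) :
    Integrable (fun a ↦ ∑' i, F i a) μ := by
  let g : ι → α →₁[μ] E := fun i ↦ (hF_int i).toL1 (F i)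
  have hg : ∑' i, ‖g i‖ₑ ≠ ⊤ := by
    refine tsum_enorm_ne_top_iff_summable_nnnorm.2 (NNReal.summable_coe.1 ?_)
    simpa only [coe_nnnorm, g, L1.norm_of_fun_eq_integral_norm] using hF_sum
  have hg_ae : ∀ᵐ a ∂μ, ∀ i, g i a = F i a := ae_all_iff.2 fun i ↦ (hF_int i).coeFn_toL1
  refine (L1.integrable_coeFn (∑' i, g i)).congr ?_
  filter_upwards [Lp.coeFn_tsum hg, hg_ae] with a ha hga
  simp only [ha, hga]

theorem integral_Ioc_zero_rpow {p a : ℝ} (hp : -1 < p) (ha : 0 ≤ a) :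
    ∫ r in Ioc 0 a, r ^ p = a ^ (p + 1) / (p + 1) := by
  rw [← intervalIntegral.integral_of_le ha, integral_rpow (.inl hp),
    zero_rpow (by linarith), sub_zero]

noncomputable def besselTerm (ν x : ℝ) (m : ℕ) : ℝ :=
  ((-1 : ℝ) ^ m / (m.factorial * Real.Gamma (m + ν + 1))) * (x / 2) ^ ((2 * m : ℝ) + ν)

theorem besselJ_eq_tsum (ν x : ℝ) : besselJ ν x = ∑' m, besselTerm ν x m := rfl

theorem Gamma_add_one_le_Gamma_natCast_add_add_one {ν : ℝ} (hν : 0 ≤ ν) (m : ℕ) :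
    Gamma (ν + 1) ≤ Gamma (m + ν + 1) := by
  induction m with
  | zero => simp
  | succ n ih =>
    have hΓ : Gamma ((n + 1 : ℕ) + ν + 1) = (n + ν + 1) * Gamma (n + ν + 1) := by
      rw [← Gamma_add_one (by positivity)]; push_cast; ring_nf
    rw [hΓ]
    exact ih.trans <| le_mul_of_one_le_left (Gamma_pos_of_pos (by positivity)).le
      (by linarith [n.cast_nonneg (α := ℝ)])

theorem abs_besselTerm {ν x : ℝ} (hν : 0 ≤ ν) (hx : 0 ≤ x) (m : ℕ) :
    |besselTerm ν x m| = (x / 2) ^ ν * (((x / 2) ^ 2) ^ m / (m.factorial * Gamma (m + ν + 1))) := by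
  have hΓ : 0 < Gamma (m + ν + 1) := Gamma_pos_of_pos (by positivity)
  rw [besselTerm, abs_mul, abs_div, abs_pow, abs_neg, abs_one, one_pow,
    abs_of_pos (by positivity), abs_of_nonneg (by positivity),
    rpow_add_of_nonneg (by positivity) (by positivity) hν, ← pow_mul, ← rpow_natCast]
  push_cast
  ring

theorem summable_abs_besselTerm {ν x : ℝ} (hν : 0 ≤ ν) (hx : 0 ≤ x) :
    Summable fun m ↦ |besselTerm ν x m| := by
  have hΓ : 0 < Gamma (ν + 1) := Gamma_pos_of_pos (by positivity)
  simp_rw [abs_besselTerm hν hx]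
  refine .mul_left _ <| .of_nonneg_of_le (fun m ↦ by positivity) (fun m ↦ ?_)
    ((summable_pow_div_factorial ((x / 2) ^ 2)).div_const (Gamma (ν + 1)))
  rw [div_div]
  gcongr
  exact Gamma_add_one_le_Gamma_natCast_add_add_one hν m

theorem rpow_mul_besselTerm_sub_one {ν k r : ℝ} (hk : 0 ≤ k) (hr : 0 < r) (m : ℕ) :
    r ^ ν * besselTerm (ν - 1) (k * r) m =
      (-1) ^ m / (m.factorial * Gamma (m + ν)) * (k / 2) ^ (2 * m + ν - 1) *
        r ^ (2 * m + 2 * ν - 1) := by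
  rw [besselTerm, show (m : ℝ) + (ν - 1) + 1 = m + ν by ring, mul_div_right_comm,
    mul_rpow (by positivity) hr.le, show 2 * (m : ℝ) + 2 * ν - 1 = ν + (2 * m + (ν - 1)) by ring,
    rpow_add hr ν]
  ring_nf

theorem integral_rpow_mul_besselTerm_sub_one {ν k a : ℝ} (hν : 0 < ν) (hk : 0 < k) (ha : 0 ≤ a)
    (m : ℕ) :
    ∫ r in Ioc 0 a, r ^ ν * besselTerm (ν - 1) (k * r) m = a ^ ν / k * besselTerm ν (k * a) m := by
  have hΓ : Gamma (m + ν + 1) = (m + ν) * Gamma (m + ν) := Gamma_add_one (by positivity)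
  have hΓpos : 0 < Gamma (m + ν) := Gamma_pos_of_pos (by positivity)
  have hk2 : (k / 2) ^ (2 * m + ν - 1) = (k / 2) ^ (2 * m + ν) / (k / 2) := by
    rw [rpow_sub (by positivity), rpow_one]
  have ha2 : a ^ (2 * m + 2 * ν - 1 + 1) = a ^ ν * a ^ (2 * m + ν) := by
    rw [← rpow_add_of_nonneg ha hν.le (by positivity)]; ring_nf
  rw [setIntegral_congr_fun measurableSet_Ioc fun r hr ↦ rpow_mul_besselTerm_sub_one hk.le hr.1 m,
    integral_const_mul, integral_Ioc_zero_rpow (by linarith [m.cast_nonneg (α := ℝ)]) ha, ha2,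
    besselTerm, hΓ, hk2, mul_div_right_comm k a, mul_rpow (by positivity) ha]
  field_simp
  ring

theorem integrableOn_and_integral_rpow_mul_besselJ_sub_one {ν k a : ℝ} (hν : 0 < ν) (hk : 0 < k)
    (ha : 0 ≤ a) :
    IntegrableOn (fun r ↦ r ^ ν * besselJ (ν - 1) (k * r)) (Ioc 0 a) ∧
      ∫ r in Ioc 0 a, r ^ ν * besselJ (ν - 1) (k * r) = a ^ ν * besselJ ν (k * a) / k := by
  set f : ℕ → ℝ → ℝ := fun m r ↦ r ^ ν * besselTerm (ν - 1) (k * r) m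
  set c : ℕ → ℝ := fun m ↦ (-1) ^ m / (m.factorial * Gamma (m + ν)) * (k / 2) ^ (2 * m + ν - 1)
  set p : ℕ → ℝ := fun m ↦ 2 * m + 2 * ν - 1
  have hf : ∀ m, EqOn (f m) (fun r ↦ c m * r ^ p m) (Ioc 0 a) :=
    fun m r hr ↦ rpow_mul_besselTerm_sub_one hk.le hr.1 m
  have hf_int : ∀ m, IntegrableOn (f m) (Ioc 0 a) := fun m ↦
    IntegrableOn.congr_fun
      ((intervalIntegral.intervalIntegrable_rpow' (a := 0) (b := a)
        (by linarith [m.cast_nonneg (α := ℝ)] : -1 < p m)).1.const_mul (c m))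
      (hf m).symm measurableSet_Ioc
  have hf_norm : ∀ m, ∫ r in Ioc 0 a, ‖f m r‖ = a ^ ν / k * |besselTerm ν (k * a) m| := by
    intro m
    have hp_int : 0 ≤ ∫ r in Ioc 0 a, r ^ p m :=
      setIntegral_nonneg measurableSet_Ioc fun r hr ↦ rpow_nonneg hr.1.le _
    rw [← abs_of_nonneg (by positivity : 0 ≤ a ^ ν / k), ← abs_mul,
      ← integral_rpow_mul_besselTerm_sub_one hν hk ha m,
      setIntegral_congr_fun measurableSet_Ioc (hf m),
      setIntegral_congr_fun measurableSet_Ioc fun r hr ↦ by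
        rw [hf m hr, norm_mul, norm_of_nonneg (rpow_nonneg hr.1.le _), Real.norm_eq_abs],
      integral_const_mul, integral_const_mul, abs_mul (c m), abs_of_nonneg hp_int]
  have hsum : Summable fun m ↦ ∫ r in Ioc 0 a, ‖f m r‖ := by
    simp_rw [hf_norm]
    exact (summable_abs_besselTerm hν.le (by positivity)).mul_left _
  have hF : (fun r ↦ r ^ ν * besselJ (ν - 1) (k * r)) = fun r ↦ ∑' m, f m r := by
    ext r; simp only [f, besselJ_eq_tsum, tsum_mul_left]
  rw [hF, ← integral_tsum_of_summable_integral_norm hf_int hsum]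
  refine ⟨integrable_tsum_of_summable_integral_norm hf_int hsum, ?_⟩
  simp_rw [f, integral_rpow_mul_besselTerm_sub_one hν hk ha, tsum_mul_left, ← besselJ_eq_tsum]
  ring

/-- The profile `G(r; r₀, r₁, P₀)`; reducible, so that the lemmas about it rewrite the unfolded
integrand of `stair_pcf_psd`. -/
noncomputable abbrev stairPCF (r₀ r₁ P₀ r : ℝ) : ℝ :=
  heaviside (r - r₁) + P₀ * (heaviside (r - r₀) - heaviside (r - r₁))

theorem heaviside_sub_sub_one (x a : ℝ) : heaviside (x - a) - 1 = -(Iic a).indicator 1 x := by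
  by_cases hx : x ≤ a <;> simp [heaviside, hx]

theorem stairPCF_sub_one (r₀ r₁ P₀ r : ℝ) :
    stairPCF r₀ r₁ P₀ r - 1 = -P₀ * (Iic r₀).indicator 1 r + (P₀ - 1) * (Iic r₁).indicator 1 r := by
  linear_combination (1 - P₀) * heaviside_sub_sub_one r r₁ + P₀ * heaviside_sub_sub_one r r₀

theorem setIntegral_Ioi_zero_mul_stairPCF_sub_one {F : ℝ → ℝ} {r₀ r₁ : ℝ} (P₀ : ℝ)
    (h₀ : IntegrableOn F (Ioc 0 r₀)) (h₁ : IntegrableOn F (Ioc 0 r₁)) :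
    ∫ r in Ioi 0, F r * (stairPCF r₀ r₁ P₀ r - 1) =
      -P₀ * (∫ r in Ioc 0 r₀, F r) + (P₀ - 1) * ∫ r in Ioc 0 r₁, F r := by
  have hind : ∀ a, IntegrableOn F (Ioc 0 a) →
      IntegrableOn ((Iic a).indicator F) (Ioi 0) ∧
        ∫ r in Ioi 0, (Iic a).indicator F r = ∫ r in Ioc 0 a, F r := fun a ha ↦
    ⟨(integrable_indicator_iff measurableSet_Iic).2 <| by
        rwa [IntegrableOn, Measure.restrict_restrict measurableSet_Iic, Iic_inter_Ioi],
      by rw [setIntegral_indicator measurableSet_Iic, Ioi_inter_Iic]⟩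
  have hmul : ∀ a r, F r * (Iic a).indicator 1 r = (Iic a).indicator F r := fun a r ↦ by
    by_cases hr : r ∈ Iic a <;> simp [hr]
  simp_rw [stairPCF_sub_one, mul_add, mul_left_comm (F _), hmul]
  rw [integral_add ((hind _ h₀).1.const_mul _) ((hind _ h₁).1.const_mul _), integral_const_mul,
    integral_const_mul, (hind _ h₀).2, (hind _ h₁).2]

theorem stair_pcf_psd_general (d : ℕ) (hd : 1 ≤ d) (r₀ r₁ P₀ N V : ℝ)
    (hr₀ : 0 ≤ r₀) (hr : r₀ ≤ r₁) :
    ∀ k > (0 : ℝ),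
      1 + (N / V) * (2 * π) ^ ((d : ℝ) / 2) * k ^ (1 - (d : ℝ) / 2) *
        (∫ r in Ioi (0 : ℝ), r ^ ((d : ℝ) / 2) * besselJ ((d : ℝ) / 2 - 1) (k * r) *
          ((heaviside (r - r₁) + P₀ * (heaviside (r - r₀) - heaviside (r - r₁))) - 1)) =
      1 - (N / V) * P₀ * (2 * π * r₀ / k) ^ ((d : ℝ) / 2) * besselJ ((d : ℝ) / 2) (k * r₀)
        - (N / V) * (1 - P₀) * (2 * π * r₁ / k) ^ ((d : ℝ) / 2) * besselJ ((d : ℝ) / 2) (k * r₁) := by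
  intro k hk
  set ν : ℝ := (d : ℝ) / 2
  have hν : 0 < ν := div_pos (Nat.cast_pos.2 hd) two_pos
  have hr₁ : 0 ≤ r₁ := hr₀.trans hr
  obtain ⟨h₀, hI₀⟩ := integrableOn_and_integral_rpow_mul_besselJ_sub_one hν hk hr₀
  obtain ⟨h₁, hI₁⟩ := integrableOn_and_integral_rpow_mul_besselJ_sub_one hν hk hr₁
  rw [setIntegral_Ioi_zero_mul_stairPCF_sub_one P₀ h₀ h₁, hI₀, hI₁]
  have hsplit : ∀ r, 0 ≤ r → (2 * π * r / k) ^ ν = (2 * π) ^ ν * r ^ ν / k ^ ν := fun r hr ↦ by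
    rw [div_rpow (by positivity) hk.le, mul_rpow (by positivity) hr]
  rw [hsplit r₀ hr₀, hsplit r₁ hr₁, rpow_sub hk, rpow_one]
  have hkν : k ^ ν ≠ 0 := (rpow_pos_of_pos hk ν).ne'
  field_simp
  ring

/-- Closed-form power spectral density of the Stair-PCF space-filling design. -/
theorem stair_pcf_psd (d : ℕ) (hd : 1 ≤ d) (r₀ r₁ P₀ N V : ℝ)
    (hr₀ : 0 ≤ r₀) (hr : r₀ ≤ r₁) (hP : 1 ≤ P₀) (hN : 0 < N) (hV : 0 < V) :
    ∀ k > (0 : ℝ),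
      1 + (N / V) * (2 * π) ^ ((d : ℝ) / 2) * k ^ (1 - (d : ℝ) / 2) *
        (∫ r in Ioi (0 : ℝ), r ^ ((d : ℝ) / 2) * besselJ ((d : ℝ) / 2 - 1) (k * r) *
          ((heaviside (r - r₁) + P₀ * (heaviside (r - r₀) - heaviside (r - r₁))) - 1)) =
      1 - (N / V) * P₀ * (2 * π * r₀ / k) ^ ((d : ℝ) / 2) * besselJ ((d : ℝ) / 2) (k * r₀)
        - (N / V) * (1 - P₀) * (2 * π * r₁ / k) ^ ((d : ℝ) / 2) * besselJ ((d : ℝ) / 2) (k * r₁) :=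
  stair_pcf_psd_general d hd r₀ r₁ P₀ N V hr₀ hr
end
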